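/- arXiv:2501.03636 — 4 statements merged into one kernel-verified Lean document; each statement's English description precedes it below -/
import Mathlib

section
/- In the free Lie algebra L on two generators over a field K, if f, g ∈ L satisfy [f, g] = 0 and g ≠ 0, then f = α·g for some scalar α ∈ K. -/
/-!
Map the free Lie algebra `L` into the free associative algebra `A = K⟨X⟩`; its image consists of
primitive elements for the unshuffle coproduct. Composing with the right-normed bracketing of words
gives the Euler derivation of `L` (Dynkin–Specht–Wever), whose eigenspaces grade `L`; on the
component of degree `n ≥ 1` the map to `A` is injective and lands in words of length `n`.

If `⁅f, g⁆ = 0`, the leading components `F`, `G` of `f`, `g` commute in `A`. Commuting elements of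
`A` homogeneous of the same degree have proportional coefficient vectors, since the coefficient of
`u * v` in `a * b` is `a_u * b_v`. Commuting primitive elements `u`, `v` of degrees `m`, `n ≥ 1`
have `n ∣ m`: `u ^ n` is a multiple of `v ^ m`, and applying `coeff w ⊗ id`, for a word `w` of
length `m`, to the coproducts `∑ (n choose k) u ^ k ⊗ u ^ (n - k)` and
`∑ (m choose j) v ^ j ⊗ v ^ (m - j)` leaves `n • u_w • u ^ (n - 1)` from the first and nothing
from the second unless `n ∣ m`. Hence `F = c • G`, and `f - c • g` has lower degree.
-/

open TensorProduct

noncomputable section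

namespace MonoidAlgebra

section CommSemiring

variable (R X : Type*) [CommSemiring R]

def lengthGrade (d : ℕ) : Submodule R (MonoidAlgebra R (FreeMonoid X)) where
  carrier := {a | ∀ w ∈ a.coeff.support, w.length = d}
  zero_mem' w hw := by simp at hw
  add_mem' {a b} ha hb w hw := by
    classical
    exact (Finset.mem_union.mp (Finsupp.support_add hw)).elim (ha w) (hb w)
  smul_mem' c a ha w hw := ha w (Finsupp.support_smul hw)

def freeAugmentation : MonoidAlgebra R (FreeMonoid X) →ₐ[R] R :=
  lift R R _ (FreeMonoid.lift fun _ => 0)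

def unshuffle : MonoidAlgebra R (FreeMonoid X) →ₐ[R]
    MonoidAlgebra R (FreeMonoid X) ⊗[R] MonoidAlgebra R (FreeMonoid X) :=
  lift R _ _ (FreeMonoid.lift fun x => of R _ (.of x) ⊗ₜ 1 + 1 ⊗ₜ of R _ (.of x))

variable {R X}

def IsPrimitive (a : MonoidAlgebra R (FreeMonoid X)) : Prop :=
  unshuffle R X a = a ⊗ₜ 1 + 1 ⊗ₜ a

theorem coeff_eq_zero_of_mem_lengthGrade {d : ℕ} {a : MonoidAlgebra R (FreeMonoid X)}
    (ha : a ∈ lengthGrade R X d) {w : FreeMonoid X} (hw : w.length ≠ d) : a.coeff w = 0 :=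
  Finsupp.notMem_support_iff.mp fun h => hw (ha w h)

theorem single_mem_lengthGrade (w : FreeMonoid X) (c : R) :
    single w c ∈ lengthGrade R X w.length := fun _ hv =>
  (Finset.mem_singleton.mp (Finsupp.support_single_subset hv)) ▸ rfl

instance : SetLike.GradedMonoid (lengthGrade R X) where
  one_mem := single_mem_lengthGrade 1 1
  mul_mem p q a b ha hb w hw := by
    classical
    obtain ⟨s, hs, t, ht, rfl⟩ := Finset.mem_mul.mp (support_coeff_mul_subset a b hw)
    rw [FreeMonoid.length_mul, ha s hs, hb t ht]

theorem pow_mem_lengthGrade {d : ℕ} {a : MonoidAlgebra R (FreeMonoid X)}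
    (ha : a ∈ lengthGrade R X d) (n : ℕ) : a ^ n ∈ lengthGrade R X (n * d) :=
  SetLike.pow_mem_graded n ha

theorem coeff_mul_of_mem_lengthGrade {u : FreeMonoid X} {a : MonoidAlgebra R (FreeMonoid X)}
    (ha : a ∈ lengthGrade R X u.length) (b : MonoidAlgebra R (FreeMonoid X)) (v : FreeMonoid X) :
    (a * b).coeff (u * v) = a.coeff u * b.coeff v := by
  classical
  rw [coeff_mul, Finsupp.sum, Finset.sum_eq_single u]
  · rw [Finsupp.sum, Finset.sum_eq_single v]
    · simp
    · intro t _ htv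
      exact if_neg fun h => htv (mul_left_cancel h)
    · intro hv
      simp [Finsupp.notMem_support_iff.mp hv]
  · intro s hs hsu
    refine Finset.sum_eq_zero fun t _ => if_neg fun h => hsu ?_
    exact FreeMonoid.toList.injective
      (List.append_inj (congrArg FreeMonoid.toList h) (ha s hs)).1
  · intro hu
    simp [Finsupp.notMem_support_iff.mp hu]

theorem freeAugmentation_single_one (c : R) : freeAugmentation R X (single 1 c) = c := by
  simp [freeAugmentation]

theorem freeAugmentation_single_of_ne_one {w : FreeMonoid X} (hw : w ≠ 1) (c : R) :
    freeAugmentation R X (single w c) = 0 := by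
  induction w using FreeMonoid.casesOn with
  | one => exact absurd rfl hw
  | of_mul x w => simp [freeAugmentation]

theorem isPrimitive_of (x : X) : IsPrimitive (of R _ (FreeMonoid.of x)) := by
  rw [IsPrimitive, unshuffle, lift_of, FreeMonoid.lift_eval_of]

theorem IsPrimitive.unshuffle_pow {a : MonoidAlgebra R (FreeMonoid X)} (ha : IsPrimitive a)
    (n : ℕ) : unshuffle R X (a ^ n) =
      ∑ k ∈ Finset.range (n + 1), (n.choose k : R) • ((a ^ k) ⊗ₜ (a ^ (n - k))) := by
  have hcomm : Commute (a ⊗ₜ[R] (1 : MonoidAlgebra R (FreeMonoid X))) (1 ⊗ₜ a) := by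
    simp [Commute, SemiconjBy, Algebra.TensorProduct.tmul_mul_tmul]
  rw [map_pow, ha, hcomm.add_pow]
  refine Finset.sum_congr rfl fun k _ => ?_
  rw [Algebra.TensorProduct.tmul_pow, Algebra.TensorProduct.tmul_pow, one_pow, one_pow,
    Algebra.TensorProduct.tmul_mul_tmul, one_mul, mul_one, Nat.cast_smul_eq_nsmul, nsmul_eq_mul,
    Nat.cast_comm]

end CommSemiring

variable {K X : Type*} [Field K]

theorem exists_eq_smul_of_commute {d : ℕ} {a b : MonoidAlgebra K (FreeMonoid X)}
    (ha : a ∈ lengthGrade K X d) (hb : b ∈ lengthGrade K X d) (hb0 : b ≠ 0) (h : Commute a b) :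
    ∃ c : K, a = c • b := by
  have hcross : ∀ u v, a.coeff u * b.coeff v = b.coeff u * a.coeff v := by
    intro u v
    by_cases hu : u.length = d
    · subst hu
      rw [← coeff_mul_of_mem_lengthGrade ha, ← coeff_mul_of_mem_lengthGrade hb, h.eq]
    · rw [coeff_eq_zero_of_mem_lengthGrade ha hu, coeff_eq_zero_of_mem_lengthGrade hb hu,
        zero_mul, zero_mul]
  obtain ⟨v, hv⟩ : ∃ v, b.coeff v ≠ 0 := by
    by_contra! h0
    exact hb0 (coeff_injective (Finsupp.ext h0))
  refine ⟨a.coeff v / b.coeff v, coeff_injective (Finsupp.ext fun u => ?_)⟩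
  rw [coeff_smul, Finsupp.smul_apply, smul_eq_mul]
  field_simp
  linear_combination hcross u v

theorem dvd_of_commute_of_isPrimitive [CharZero K] {m n : ℕ}
    {a b : MonoidAlgebra K (FreeMonoid X)} (hn : n ≠ 0) (ha : a ∈ lengthGrade K X m)
    (hb : b ∈ lengthGrade K X n) (ha0 : a ≠ 0) (hb0 : b ≠ 0) (hpa : IsPrimitive a)
    (hpb : IsPrimitive b) (h : Commute a b) : n ∣ m := by
  by_contra hnm
  have hm : m ≠ 0 := by rintro rfl; exact hnm (dvd_zero n)
  obtain ⟨c, hc⟩ := exists_eq_smul_of_commute (pow_mem_lengthGrade ha n)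
    (mul_comm m n ▸ pow_mem_lengthGrade hb m) (pow_ne_zero m hb0) (h.pow_pow n m)
  obtain ⟨w, hw⟩ : ∃ w, a.coeff w ≠ 0 := by
    by_contra! h0
    exact ha0 (coeff_injective (Finsupp.ext h0))
  have hwm : w.length = m := ha w (Finsupp.mem_support_iff.mpr hw)
  let ℓ : MonoidAlgebra K (FreeMonoid X) ⊗[K] MonoidAlgebra K (FreeMonoid X) →ₗ[K]
      MonoidAlgebra K (FreeMonoid X) :=
    (TensorProduct.lid K _).toLinearMap ∘ₗ
      TensorProduct.map (Finsupp.lapply w ∘ₗ (coeffLinearEquiv K).toLinearMap) LinearMap.id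
  have hℓ : ∀ x y, ℓ (x ⊗ₜ y) = x.coeff w • y := fun _ _ => rfl
  have hℓa : ℓ (unshuffle K X (a ^ n)) = (n * a.coeff w) • a ^ (n - 1) := by
    rw [hpa.unshuffle_pow, map_sum, Finset.sum_eq_single 1]
    · rw [map_smul, hℓ, pow_one, Nat.choose_one_right, smul_smul]
    · intro k _ hk
      rw [map_smul, hℓ, coeff_eq_zero_of_mem_lengthGrade (pow_mem_lengthGrade ha k), zero_smul,
        smul_zero]
      rw [hwm]
      intro hkm
      exact hk (Nat.eq_of_mul_eq_mul_right (Nat.pos_of_ne_zero hm) (by rw [one_mul, ← hkm]))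
    · intro h1
      exact absurd (Finset.mem_range.mpr (by omega)) h1
  have hℓb : ℓ (unshuffle K X (b ^ m)) = 0 := by
    rw [hpb.unshuffle_pow, map_sum]
    refine Finset.sum_eq_zero fun j _ => ?_
    rw [map_smul, hℓ, coeff_eq_zero_of_mem_lengthGrade (pow_mem_lengthGrade hb j), zero_smul,
      smul_zero]
    rw [hwm]
    rintro rfl
    exact hnm (dvd_mul_left n j)
  have hzero : (n * a.coeff w) • a ^ (n - 1) = 0 := by
    rw [← hℓa, hc, map_smul, map_smul, hℓb, smul_zero]
  simp [hn, hw, ha0] at hzero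

end MonoidAlgebra

namespace FreeLieAlgebra

section induction

variable {R X : Type*} [CommRing R]

theorem lieSpan_range_of :
    LieSubalgebra.lieSpan R (FreeLieAlgebra R X) (Set.range (of R)) = ⊤ := by
  set S := LieSubalgebra.lieSpan R (FreeLieAlgebra R X) (Set.range (of R))
  let ψ := lift R fun x => (⟨of R x, LieSubalgebra.subset_lieSpan ⟨x, rfl⟩⟩ : S)
  have hψ : S.incl.comp ψ = LieHom.id := hom_ext fun x => by simp [ψ, lift_of_apply]
  rw [eq_top_iff]
  intro u _
  have hu : S.incl (ψ u) = u := LieHom.congr_fun hψ u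
  exact hu ▸ (ψ u).2

@[elab_as_elim]
theorem induction_on {p : FreeLieAlgebra R X → Prop} (u : FreeLieAlgebra R X)
    (of : ∀ x, p (of R x)) (zero : p 0) (add : ∀ u v, p u → p v → p (u + v))
    (smul : ∀ (c : R) u, p u → p (c • u)) (lie : ∀ u v, p u → p v → p ⁅u, v⁆) : p u := by
  have hu : u ∈ LieSubalgebra.lieSpan R (FreeLieAlgebra R X) (Set.range (FreeLieAlgebra.of R)) :=
    lieSpan_range_of (R := R) ▸ LieSubalgebra.mem_top (R := R) u
  induction hu using LieSubalgebra.lieSpan_induction (R := R) with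
  | mem u hu => obtain ⟨x, rfl⟩ := hu; exact of x
  | zero => exact zero
  | add u v _ _ hu hv => exact add u v hu hv
  | smul c u _ hu => exact smul c u hu
  | lie u v _ _ hu hv => exact lie u v hu hv

end induction

attribute [local instance] LieRing.ofAssociativeRing

open MonoidAlgebra

section CommRing

variable {R X : Type*} [CommRing R]

variable (R X) in
def toMonoidAlgebra : FreeLieAlgebra R X →ₗ⁅R⁆ MonoidAlgebra R (FreeMonoid X) :=
  lift R fun x => MonoidAlgebra.of R _ (FreeMonoid.of x)

local notation "φ" => toMonoidAlgebra R X

theorem toMonoidAlgebra_of (x : X) : φ (of R x) = MonoidAlgebra.of R _ (FreeMonoid.of x) :=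
  lift_of_apply _ x

theorem toMonoidAlgebra_lie (u v : FreeLieAlgebra R X) :
    φ ⁅u, v⁆ = φ u * φ v - φ v * φ u := by
  rw [LieHom.map_lie, Ring.lie_def]

theorem commute_toMonoidAlgebra_of_lie_eq_zero {u v : FreeLieAlgebra R X} (h : ⁅u, v⁆ = 0) :
    Commute (φ u) (φ v) :=
  sub_eq_zero.mp (by rw [← toMonoidAlgebra_lie, h, map_zero])

theorem freeAugmentation_toMonoidAlgebra (u : FreeLieAlgebra R X) :
    freeAugmentation R X (φ u) = 0 := by
  induction u using induction_on with
  | of x => simp [toMonoidAlgebra_of, freeAugmentation]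
  | zero => simp
  | add u v hu hv => simp [hu, hv]
  | smul c u hu => simp [hu]
  | lie u v hu hv =>
    rw [toMonoidAlgebra_lie, map_sub, map_mul, map_mul, hu, hv, mul_zero, sub_zero]

theorem isPrimitive_toMonoidAlgebra (u : FreeLieAlgebra R X) : IsPrimitive (φ u) := by
  induction u using induction_on with
  | of x => rw [toMonoidAlgebra_of]; exact isPrimitive_of x
  | zero => simp [IsPrimitive]
  | add u v hu hv =>
    rw [IsPrimitive, map_add, map_add, hu, hv, add_tmul, tmul_add]
    abel
  | smul c u hu =>
    rw [IsPrimitive, map_smul, map_smul, hu, smul_add, smul_tmul', tmul_smul]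
  | lie u v hu hv =>
    rw [IsPrimitive, toMonoidAlgebra_lie, map_sub, map_mul, map_mul, hu, hv]
    simp only [add_mul, mul_add, Algebra.TensorProduct.tmul_mul_tmul, one_mul, mul_one, sub_tmul,
      tmul_sub]
    abel

variable (R) in
def rightNormed : List X → FreeLieAlgebra R X
  | [] => 0
  | [x] => of R x
  | x :: y :: l => ⁅of R x, rightNormed (y :: l)⁆

variable (R X) in
def dynkin : MonoidAlgebra R (FreeMonoid X) →ₗ[R] FreeLieAlgebra R X :=
  Finsupp.linearCombination R (fun w : FreeMonoid X => rightNormed R w.toList) ∘ₗ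
    (coeffLinearEquiv R).toLinearMap

theorem dynkin_single (w : FreeMonoid X) (c : R) :
    dynkin R X (single w c) = c • rightNormed R w.toList :=
  Finsupp.linearCombination_single R c w

theorem dynkin_of_mul (x : X) (a : MonoidAlgebra R (FreeMonoid X)) :
    dynkin R X (MonoidAlgebra.of R _ (FreeMonoid.of x) * a) =
      ⁅of R x, dynkin R X a⁆ + freeAugmentation R X a • of R x := by
  induction a using MonoidAlgebra.induction_linear with
  | zero => simp
  | add a b ha hb => rw [mul_add, map_add, ha, hb, map_add, map_add, lie_add, add_smul]; abel
  | single w c =>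
    rw [MonoidAlgebra.of_apply, single_mul_single, one_mul, dynkin_single, dynkin_single]
    induction w using FreeMonoid.casesOn with
    | one => simp [rightNormed, freeAugmentation_single_one]
    | of_mul y w =>
      rw [freeAugmentation_single_of_ne_one (by simp), zero_smul, add_zero, lie_smul]
      simp [rightNormed]

theorem dynkin_toMonoidAlgebra_mul (u : FreeLieAlgebra R X) {a : MonoidAlgebra R (FreeMonoid X)}
    (ha : freeAugmentation R X a = 0) : dynkin R X (φ u * a) = ⁅u, dynkin R X a⁆ := by
  induction u using induction_on generalizing a with
  | of x => rw [toMonoidAlgebra_of, dynkin_of_mul, ha, zero_smul, add_zero]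
  | zero => simp
  | add u v hu hv => rw [map_add, add_mul, map_add, hu ha, hv ha, add_lie]
  | smul c u hu => rw [map_smul, smul_mul_assoc, map_smul, hu ha, smul_lie]
  | lie u v hu hv =>
    have hva : freeAugmentation R X (φ v * a) = 0 := by
      rw [map_mul, freeAugmentation_toMonoidAlgebra, zero_mul]
    have hua : freeAugmentation R X (φ u * a) = 0 := by
      rw [map_mul, freeAugmentation_toMonoidAlgebra, zero_mul]
    rw [toMonoidAlgebra_lie, sub_mul, map_sub, mul_assoc, mul_assoc, hu hva, hv hua, hu ha, hv ha,
      lie_lie]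

variable (R X) in
def euler : Module.End R (FreeLieAlgebra R X) :=
  dynkin R X ∘ₗ (φ : FreeLieAlgebra R X →ₗ[R] MonoidAlgebra R (FreeMonoid X))

theorem euler_apply (u : FreeLieAlgebra R X) : euler R X u = dynkin R X (φ u) := rfl

theorem euler_of (x : X) : euler R X (of R x) = of R x := by
  rw [euler_apply, toMonoidAlgebra_of, MonoidAlgebra.of_apply, dynkin_single,
    FreeMonoid.toList_of, rightNormed, one_smul]

theorem euler_lie (u v : FreeLieAlgebra R X) :
    euler R X ⁅u, v⁆ = ⁅euler R X u, v⁆ + ⁅u, euler R X v⁆ := by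
  rw [euler_apply, toMonoidAlgebra_lie, map_sub,
    dynkin_toMonoidAlgebra_mul u (freeAugmentation_toMonoidAlgebra v),
    dynkin_toMonoidAlgebra_mul v (freeAugmentation_toMonoidAlgebra u), ← euler_apply,
    ← euler_apply, ← lie_skew (euler R X u) v]
  abel

variable (R X) in
/-- The eigenvalue condition makes `φ` injective on the grade and the length condition makes its
image homogeneous; imposing both avoids proving that `φ` is injective. -/
def lieGrade (n : ℕ) : Submodule R (FreeLieAlgebra R X) :=
  (euler R X).eigenspace n ⊓
    (lengthGrade R X n).comap (φ : FreeLieAlgebra R X →ₗ[R] MonoidAlgebra R (FreeMonoid X))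

theorem mem_lieGrade {n : ℕ} {u : FreeLieAlgebra R X} :
    u ∈ lieGrade R X n ↔ euler R X u = (n : R) • u ∧ φ u ∈ lengthGrade R X n := by
  rw [lieGrade, Submodule.mem_inf, Module.End.mem_eigenspace_iff]
  rfl

theorem of_mem_lieGrade_one (x : X) : of R x ∈ lieGrade R X 1 := by
  rw [mem_lieGrade, euler_of, toMonoidAlgebra_of, MonoidAlgebra.of_apply, Nat.cast_one, one_smul]
  exact ⟨rfl, single_mem_lengthGrade (FreeMonoid.of x) 1⟩

theorem lie_mem_lieGrade {p q : ℕ} {u v : FreeLieAlgebra R X} (hu : u ∈ lieGrade R X p)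
    (hv : v ∈ lieGrade R X q) : ⁅u, v⁆ ∈ lieGrade R X (p + q) := by
  rw [mem_lieGrade] at hu hv ⊢
  refine ⟨?_, ?_⟩
  · rw [euler_lie, hu.1, hv.1, smul_lie, lie_smul, ← add_smul, Nat.cast_add]
  · rw [toMonoidAlgebra_lie]
    exact Submodule.sub_mem _ (SetLike.mul_mem_graded hu.2 hv.2)
      (add_comm p q ▸ SetLike.mul_mem_graded hv.2 hu.2)

variable (R X) in
def lieFiltration (B : ℕ) : Submodule R (FreeLieAlgebra R X) :=
  ⨆ n ∈ Finset.Icc 1 B, lieGrade R X n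

theorem lieGrade_le_lieFiltration {n B : ℕ} (hn : n ≠ 0) (hnB : n ≤ B) :
    lieGrade R X n ≤ lieFiltration R X B :=
  le_biSup (lieGrade R X) (Finset.mem_Icc.mpr ⟨Nat.one_le_iff_ne_zero.mpr hn, hnB⟩)

theorem lieFiltration_mono : Monotone (lieFiltration R X) := fun _ _ h =>
  biSup_mono fun _ hn => Finset.Icc_subset_Icc_right h hn

theorem lieFiltration_zero : lieFiltration R X 0 = ⊥ := by
  simp [lieFiltration]

theorem lieFiltration_succ (B : ℕ) :
    lieFiltration R X (B + 1) = lieFiltration R X B ⊔ lieGrade R X (B + 1) := by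
  rw [lieFiltration, ← Finset.insert_Icc_right_eq_Icc_add_one (by omega), Finset.iSup_insert,
    sup_comm]
  rfl

theorem lie_mem_lieFiltration {p q : ℕ} {u v : FreeLieAlgebra R X}
    (hu : u ∈ lieFiltration R X p) (hv : v ∈ lieFiltration R X q) :
    ⁅u, v⁆ ∈ lieFiltration R X (p + q) := by
  obtain ⟨μ, rfl⟩ := (Submodule.mem_iSup_finset_iff_exists_sum _ u).mp hu
  obtain ⟨ν, rfl⟩ := (Submodule.mem_iSup_finset_iff_exists_sum _ v).mp hv
  rw [sum_lie_sum]
  refine Submodule.sum_mem _ fun i hi => Submodule.sum_mem _ fun j hj => ?_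
  rw [Finset.mem_Icc] at hi hj
  exact lieGrade_le_lieFiltration (by omega) (by omega) (lie_mem_lieGrade (μ i).2 (ν j).2)

theorem exists_mem_lieFiltration (u : FreeLieAlgebra R X) : ∃ B, u ∈ lieFiltration R X B := by
  induction u using induction_on with
  | of x => exact ⟨1, lieGrade_le_lieFiltration one_ne_zero le_rfl (of_mem_lieGrade_one x)⟩
  | zero => exact ⟨0, zero_mem _⟩
  | add u v hu hv =>
    obtain ⟨p, hp⟩ := hu
    obtain ⟨q, hq⟩ := hv
    exact ⟨p + q, add_mem (lieFiltration_mono (Nat.le_add_right p q) hp)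
      (lieFiltration_mono (Nat.le_add_left q p) hq)⟩
  | smul c u hu =>
    obtain ⟨p, hp⟩ := hu
    exact ⟨p, Submodule.smul_mem _ c hp⟩
  | lie u v hu hv =>
    obtain ⟨p, hp⟩ := hu
    obtain ⟨q, hq⟩ := hv
    exact ⟨p + q, lie_mem_lieFiltration hp hq⟩

theorem exists_top_component {g : FreeLieAlgebra R X} (hg : g ≠ 0) :
    ∃ N, ∃ g' ∈ lieFiltration R X N, ∃ G ∈ lieGrade R X (N + 1), G ≠ 0 ∧ g = g' + G := by
  classical
  have hex := exists_mem_lieFiltration g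
  have hB : g ∈ lieFiltration R X (Nat.find hex) := Nat.find_spec hex
  obtain ⟨N, hN⟩ : ∃ N, Nat.find hex = N + 1 := Nat.exists_eq_succ_of_ne_zero fun h0 => by
    rw [h0, lieFiltration_zero, Submodule.mem_bot] at hB
    exact hg hB
  rw [hN, lieFiltration_succ, Submodule.mem_sup] at hB
  obtain ⟨g', hg', G, hG, rfl⟩ := hB
  refine ⟨N, g', hg', G, hG, ?_, rfl⟩
  rintro rfl
  exact Nat.find_min hex (by omega : N < Nat.find hex) (by rwa [add_zero])

end CommRing

variable {K X : Type*} [Field K] [CharZero K]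

local notation "φ" => toMonoidAlgebra K X

theorem eq_zero_of_mem_lieGrade {n : ℕ} (hn : n ≠ 0) {u : FreeLieAlgebra K X}
    (hu : u ∈ lieGrade K X n) (h : φ u = 0) : u = 0 := by
  have h0 : (n : K) • u = 0 := by rw [← (mem_lieGrade.mp hu).1, euler_apply, h, map_zero]
  exact (smul_eq_zero.mp h0).resolve_left (Nat.cast_ne_zero.mpr hn)

theorem disjoint_lieFiltration_lieGrade (B : ℕ) :
    Disjoint (lieFiltration K X B) (lieGrade K X (B + 1)) := by
  have hind : iSupIndep fun n : ℕ => (euler K X).eigenspace n :=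
    (Module.End.eigenspaces_iSupIndep (euler K X)).comp Nat.cast_injective
  have hB : B + 1 ∉ (Finset.Icc 1 B : Set ℕ) := by simp
  have hle : lieFiltration K X B ≤
      ⨆ n ∈ (Finset.Icc 1 B : Set ℕ), (euler K X).eigenspace (n : K) :=
    iSup₂_mono' fun n hn => ⟨n, Finset.mem_coe.mpr hn, inf_le_left⟩
  exact (hind.disjoint_biSup hB).symm.mono hle inf_le_left

theorem lie_eq_zero_of_lie_add_eq_zero {p q : ℕ} {f' F g' G : FreeLieAlgebra K X}
    (hf' : f' ∈ lieFiltration K X p) (hF : F ∈ lieGrade K X (p + 1))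
    (hg' : g' ∈ lieFiltration K X q) (hG : G ∈ lieGrade K X (q + 1))
    (h : ⁅f' + F, g' + G⁆ = 0) : ⁅F, G⁆ = 0 := by
  have hF' : F ∈ lieFiltration K X (p + 1) := lieGrade_le_lieFiltration p.succ_ne_zero le_rfl hF
  have hG' : G ∈ lieFiltration K X (q + 1) := lieGrade_le_lieFiltration q.succ_ne_zero le_rfl hG
  have h1 : ⁅f', g'⁆ ∈ lieFiltration K X (p + q + 1) :=
    lieFiltration_mono (p + q).le_succ (lie_mem_lieFiltration hf' hg')
  have h2 : ⁅f', G⁆ ∈ lieFiltration K X (p + (q + 1)) := lie_mem_lieFiltration hf' hG'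
  have h3 : ⁅F, g'⁆ ∈ lieFiltration K X (p + q + 1) :=
    add_right_comm p 1 q ▸ lie_mem_lieFiltration hF' hg'
  have hlow := add_mem (add_mem h1 h2) h3
  have htop : ⁅F, G⁆ ∈ lieGrade K X (p + q + 1 + 1) := by
    convert lie_mem_lieGrade hF hG using 2; omega
  have hsum : ⁅F, G⁆ = -(⁅f', g'⁆ + ⁅f', G⁆ + ⁅F, g'⁆) := by
    rw [add_lie, lie_add, lie_add] at h
    rw [eq_neg_iff_add_eq_zero, ← h]
    abel
  exact Submodule.disjoint_def.mp (disjoint_lieFiltration_lieGrade (p + q + 1)) _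
    (hsum ▸ neg_mem hlow) htop

theorem eq_of_lie_eq_zero_of_mem_lieGrade {m n : ℕ} (hm : m ≠ 0) (hn : n ≠ 0)
    {F G : FreeLieAlgebra K X} (hF : F ∈ lieGrade K X m) (hG : G ∈ lieGrade K X n)
    (hF0 : F ≠ 0) (hG0 : G ≠ 0) (h : ⁅F, G⁆ = 0) : m = n := by
  have hφF : φ F ≠ 0 := fun h0 => hF0 (eq_zero_of_mem_lieGrade hm hF h0)
  have hφG : φ G ≠ 0 := fun h0 => hG0 (eq_zero_of_mem_lieGrade hn hG h0)
  have hcomm := commute_toMonoidAlgebra_of_lie_eq_zero h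
  exact Nat.dvd_antisymm
    (dvd_of_commute_of_isPrimitive hm (mem_lieGrade.mp hG).2 (mem_lieGrade.mp hF).2 hφG hφF
      (isPrimitive_toMonoidAlgebra G) (isPrimitive_toMonoidAlgebra F) hcomm.symm)
    (dvd_of_commute_of_isPrimitive hn (mem_lieGrade.mp hF).2 (mem_lieGrade.mp hG).2 hφF hφG
      (isPrimitive_toMonoidAlgebra F) (isPrimitive_toMonoidAlgebra G) hcomm)

theorem exists_eq_smul_of_mem_lieGrade {n : ℕ} (hn : n ≠ 0) {F G : FreeLieAlgebra K X}
    (hF : F ∈ lieGrade K X n) (hG : G ∈ lieGrade K X n) (hG0 : G ≠ 0) (h : ⁅F, G⁆ = 0) :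
    ∃ c : K, F = c • G := by
  have hφG : φ G ≠ 0 := fun h0 => hG0 (eq_zero_of_mem_lieGrade hn hG h0)
  obtain ⟨c, hc⟩ := exists_eq_smul_of_commute (mem_lieGrade.mp hF).2 (mem_lieGrade.mp hG).2 hφG
    (commute_toMonoidAlgebra_of_lie_eq_zero h)
  have hFG : φ (F - c • G) = 0 := by rw [map_sub, map_smul, hc, sub_self]
  exact ⟨c, sub_eq_zero.mp
    (eq_zero_of_mem_lieGrade hn (sub_mem hF (Submodule.smul_mem _ c hG)) hFG)⟩

theorem exists_eq_smul_of_mem_lieFiltration {g : FreeLieAlgebra K X} (hg : g ≠ 0) (B : ℕ) :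
    ∀ f ∈ lieFiltration K X B, ⁅f, g⁆ = 0 → ∃ α : K, f = α • g := by
  obtain ⟨N, g', hg', G, hG, hG0, rfl⟩ := exists_top_component hg
  induction B with
  | zero =>
    intro f hf _
    rw [lieFiltration_zero, Submodule.mem_bot] at hf
    exact ⟨0, by rw [hf, zero_smul]⟩
  | succ B ih =>
    intro f hf hfg
    rw [lieFiltration_succ, Submodule.mem_sup] at hf
    obtain ⟨f', hf', F, hF, rfl⟩ := hf
    by_cases hF0 : F = 0
    · subst hF0
      rw [add_zero] at hfg ⊢
      exact ih f' hf' hfg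
    have hFG : ⁅F, G⁆ = 0 := lie_eq_zero_of_lie_add_eq_zero hf' hF hg' hG hfg
    obtain rfl : B = N := Nat.succ_injective
      (eq_of_lie_eq_zero_of_mem_lieGrade B.succ_ne_zero N.succ_ne_zero hF hG hF0 hG0 hFG)
    obtain ⟨c, rfl⟩ := exists_eq_smul_of_mem_lieGrade B.succ_ne_zero hF hG hG0 hFG
    have hrest : f' - c • g' = (f' + c • G) - c • (g' + G) := by module
    obtain ⟨α, hα⟩ := ih (f' - c • g') (sub_mem hf' (Submodule.smul_mem _ c hg')) (by
      rw [hrest, sub_lie, hfg, smul_lie, lie_self, smul_zero, sub_zero])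
    exact ⟨α + c, by rw [add_smul, ← hα]; module⟩

theorem exists_eq_smul_of_lie_eq_zero {f g : FreeLieAlgebra K X} (h : ⁅f, g⁆ = 0) (hg : g ≠ 0) :
    ∃ α : K, f = α • g :=
  have ⟨B, hB⟩ := exists_mem_lieFiltration f
  exists_eq_smul_of_mem_lieFiltration hg B f hB h

end FreeLieAlgebra

end

theorem free_lie_bracket_zero_proportional {K : Type*} [Field K] [CharZero K]
    (f g : FreeLieAlgebra K (Fin 2)) (h : ⁅f, g⁆ = 0) (hg : g ≠ 0) :
    ∃ α : K, f = α • g :=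
  FreeLieAlgebra.exists_eq_smul_of_lie_eq_zero h hg
end

section
/- In the free Lie algebra L on x, y over a field of characteristic 0, for all naturals a ≥ 0 and b ≥ 1: [y,x,x^{(a)},y,x^{(b)}] = [y,x,x^{(a+b)},y] + ∑_{i=0}^{b-1} C(b,i)·[y,x,x^{(a+i)},[y,x^{(b-i)}]], where x^{(m)} denotes m repeated bracketings by x and all unbracketed products are left-normed. -/
/-- Left-normed iterated bracketing by `x`: `adRight x n u = [u, x, ..., x]` (n copies of x). -/
def adRight {L : Type*} [LieRing L] (x : L) : ℕ → L → L
  | 0, u => u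
  | n + 1, u => ⁅adRight x n u, x⁆

lemma adRight_eq_iterate {K L : Type*} [CommRing K] [LieRing L] [LieAlgebra K L]
    (x : L) (n : ℕ) (u : L) :
    adRight x n u = (LieDerivation.inner K L L x)^[n] u := by
  induction n with
  | zero => rfl
  | succ n ih => rw [Function.iterate_succ_apply']; simp [adRight, ih]

lemma adRight_adRight {L : Type*} [LieRing L] (x : L) (m n : ℕ) (u : L) :
    adRight x n (adRight x m u) = adRight x (m + n) u := by
  induction n with
  | zero => rfl
  | succ n ih => simp [adRight, ih, ← Nat.add_assoc]

theorem leftnormed_rewriting_lemma {K : Type*} [Field K] [CharZero K]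
    (a b : ℕ) (hb : 1 ≤ b) :
    letI X := FreeLieAlgebra.of K (0 : Fin 2)
    letI Y := FreeLieAlgebra.of K (1 : Fin 2)
    adRight X b ⁅adRight X a ⁅Y, X⁆, Y⁆ =
      ⁅adRight X (a + b) ⁅Y, X⁆, Y⁆ +
        ∑ i ∈ Finset.range b,
          (b.choose i) • ⁅adRight X (a + i) ⁅Y, X⁆, adRight X (b - i) Y⁆ := by
  set X := FreeLieAlgebra.of K (0 : Fin 2)
  set Y := FreeLieAlgebra.of K (1 : Fin 2)
  set L := FreeLieAlgebra K (Fin 2)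
  rw [adRight_eq_iterate (K := K), LieDerivation.iterate_apply_lie', Finset.sum_range_succ]
  rw [add_comm]
  congr 1
  · simp [Nat.choose_self, ← adRight_eq_iterate (K := K), adRight_adRight, adRight]
  · refine Finset.sum_congr rfl fun i hi => ?_
    rw [← adRight_eq_iterate (K := K), ← adRight_eq_iterate (K := K), adRight_adRight]
end

section
/- In the free Lie algebra on x, y over a field of characteristic 0 with derivation δ(x)=0, δ(y)=x: if f = α[y,x,x,y,y] + β[y,x,y,y,x] (left-normed) satisfies δ(f)=0, then α = β = 0. -/
/-!
By the Leibniz rule `δ f = α • u + (α + 2β) • v` with `u = [y,x,x,x,y]` and `v = [y,x,x,y,x]`;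
the third commutator `[y,x,y,x,x]` that appears equals `v` by the Jacobi identity, since
`[a, a] = 0` for `a = [y, x]`. The Lie algebra map to `𝔤𝔩₂` sending `x ↦ !![0, 1; 1, 0]` and
`y ↦ !![0, 0; 1, 0]` takes `u ↦ !![0, 0; 8, 0]` and `v ↦ !![0, -4; 4, 0]`, so `u` and `v` are
linearly independent and `α = α + 2β = 0`.
-/

open FreeLieAlgebra

attribute [local instance 100] LieRing.ofAssociativeRing

theorem lie_lie_lie_comm {L : Type*} [LieRing L] (a b : L) :
    ⁅⁅⁅a, b⁆, a⁆, b⁆ = ⁅⁅⁅a, b⁆, b⁆, a⁆ := by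
  rw [lie_lie, lie_self, zero_sub, lie_skew]

section Leibniz

variable {L : Type*} [LieRing L] {δ : L → L} {x y : L}

theorem apply_lie_yxxyy (hδ : ∀ a b : L, δ ⁅a, b⁆ = ⁅δ a, b⁆ + ⁅a, δ b⁆)
    (hx : δ x = 0) (hy : δ y = x) :
    δ ⁅⁅⁅⁅y, x⁆, x⁆, y⁆, y⁆ = ⁅⁅⁅⁅y, x⁆, x⁆, x⁆, y⁆ + ⁅⁅⁅⁅y, x⁆, x⁆, y⁆, x⁆ := by
  simp only [hδ, hx, hy, lie_self, zero_lie, lie_zero, add_zero, zero_add]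

theorem apply_lie_yxyyx (hδ : ∀ a b : L, δ ⁅a, b⁆ = ⁅δ a, b⁆ + ⁅a, δ b⁆)
    (hx : δ x = 0) (hy : δ y = x) :
    δ ⁅⁅⁅⁅y, x⁆, y⁆, y⁆, x⁆ = 2 • ⁅⁅⁅⁅y, x⁆, x⁆, y⁆, x⁆ := by
  simp only [hδ, hx, hy, lie_self, zero_lie, lie_zero, add_zero, zero_add, add_lie,
    lie_lie_lie_comm y x, two_smul]

end Leibniz

theorem linearIndependent_lie_yxxxy_yxxyx {K : Type*} [Field K] (h2 : (2 : K) ≠ 0) :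
    LinearIndependent K
      ![⁅⁅⁅⁅of K (1 : Fin 2), of K (0 : Fin 2)⁆, of K (0 : Fin 2)⁆, of K (0 : Fin 2)⁆,
          of K (1 : Fin 2)⁆,
        ⁅⁅⁅⁅of K (1 : Fin 2), of K (0 : Fin 2)⁆, of K (0 : Fin 2)⁆, of K (1 : Fin 2)⁆,
          of K (0 : Fin 2)⁆] := by
  set X : Matrix (Fin 2) (Fin 2) K := !![0, 1; 1, 0]
  set Y : Matrix (Fin 2) (Fin 2) K := !![0, 0; 1, 0]
  obtain ⟨hU, hV⟩ :
      ⁅⁅⁅⁅Y, X⁆, X⁆, X⁆, Y⁆ = !![0, 0; 8, 0] ∧ ⁅⁅⁅⁅Y, X⁆, X⁆, Y⁆, X⁆ = !![0, -4; 4, 0] := by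
    simp only [X, Y, Ring.lie_def, Matrix.mul_fin_two, Matrix.of_sub_of, Matrix.cons_sub_cons,
      Matrix.empty_sub_empty]
    norm_num
  rw [LinearIndependent.pair_iff]
  intro s t hst
  have himage := congrArg (lift K ![X, Y]) hst
  simp only [map_add, map_smul, LieHom.map_lie, lift_of_apply, Matrix.cons_val_zero,
    Matrix.cons_val_one, hU, hV, map_zero] at himage
  have h4 : (4 : K) ≠ 0 := by simpa [show (4 : K) = 2 * 2 by norm_num] using h2
  have h8 : (8 : K) ≠ 0 := by simpa [show (8 : K) = 4 * 2 by norm_num] using ⟨h4, h2⟩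
  obtain rfl : t = 0 := by simpa [h4] using congrFun (congrFun himage 0) 1
  exact ⟨by simpa [h8] using congrFun (congrFun himage 1) 0, rfl⟩

theorem degree_five_constants_trivial {K : Type*} [Field K] [CharZero K]
    (δ : FreeLieAlgebra K (Fin 2) →ₗ[K] FreeLieAlgebra K (Fin 2))
    (hδ : ∀ a b : FreeLieAlgebra K (Fin 2), δ ⁅a, b⁆ = ⁅δ a, b⁆ + ⁅a, δ b⁆)
    (hx : δ (FreeLieAlgebra.of K (0 : Fin 2)) = 0)
    (hy : δ (FreeLieAlgebra.of K (1 : Fin 2)) = FreeLieAlgebra.of K (0 : Fin 2))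
    (α β : K)
    (f : FreeLieAlgebra K (Fin 2))
    (hf : f = α • ⁅⁅⁅⁅FreeLieAlgebra.of K (1 : Fin 2), FreeLieAlgebra.of K (0 : Fin 2)⁆,
        FreeLieAlgebra.of K (0 : Fin 2)⁆, FreeLieAlgebra.of K (1 : Fin 2)⁆, FreeLieAlgebra.of K (1 : Fin 2)⁆
      + β • ⁅⁅⁅⁅FreeLieAlgebra.of K (1 : Fin 2), FreeLieAlgebra.of K (0 : Fin 2)⁆,
        FreeLieAlgebra.of K (1 : Fin 2)⁆, FreeLieAlgebra.of K (1 : Fin 2)⁆, FreeLieAlgebra.of K (0 : Fin 2)⁆)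
    (h : δ f = 0) :
    α = 0 ∧ β = 0 := by
  have h2 : (2 : K) ≠ 0 := two_ne_zero
  rw [hf, map_add, map_smul, map_smul, apply_lie_yxxyy hδ hx hy, apply_lie_yxyyx hδ hx hy] at h
  obtain ⟨hα, hγ⟩ := LinearIndependent.pair_iff.mp (linearIndependent_lie_yxxxy_yxxyx h2)
    α (α + 2 * β) (by rw [← h]; module)
  refine ⟨hα, ?_⟩
  rw [hα, zero_add] at hγ
  exact (mul_eq_zero.mp hγ).resolve_left h2
end

section
/- In the free Lie algebra on x, y over a field of characteristic 0 with derivation δ(x)=0, δ(y)=x, the element [[y,x,x,y],[y,x,x]] - [[y,x,x,x],[y,x,y]] equals [[[y,x,y],[y,x,x]], x] and is a constant of δ. -/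
lemma degree_seven_aux {L : Type*} [LieRing L] (X Y : L) :
    ⁅⁅⁅⁅Y, X⁆, X⁆, Y⁆, ⁅⁅Y, X⁆, X⁆⁆ - ⁅⁅⁅⁅Y, X⁆, X⁆, X⁆, ⁅⁅Y, X⁆, Y⁆⁆
        = ⁅⁅⁅⁅Y, X⁆, Y⁆, ⁅⁅Y, X⁆, X⁆⁆, X⁆ := by
  set b := ⁅Y, X⁆ with hbdef
  set a := ⁅b, X⁆ with hadef
  set c := ⁅b, Y⁆ with hcdef
  have hb : ⁅c, X⁆ = ⁅a, Y⁆ := by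
    rw [hcdef, hadef, lie_lie b Y X, ← hbdef, lie_self, zero_sub, lie_skew]
  rw [lie_lie c a X, hb, ← lie_skew c ⁅a,X⁆, ← lie_skew ⁅a,Y⁆ a]
  abel

theorem degree_seven_constant {K : Type*} [Field K] [CharZero K]
    (δ : FreeLieAlgebra K (Fin 2) →ₗ[K] FreeLieAlgebra K (Fin 2))
    (hδ : ∀ a b, δ ⁅a, b⁆ = ⁅δ a, b⁆ + ⁅a, δ b⁆)
    (hx : δ (FreeLieAlgebra.of K 0) = 0)
    (hy : δ (FreeLieAlgebra.of K 1) = FreeLieAlgebra.of K 0) :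
    letI X := FreeLieAlgebra.of K (0 : Fin 2)
    letI Y := FreeLieAlgebra.of K (1 : Fin 2)
    ⁅⁅⁅⁅Y, X⁆, X⁆, Y⁆, ⁅⁅Y, X⁆, X⁆⁆ - ⁅⁅⁅⁅Y, X⁆, X⁆, X⁆, ⁅⁅Y, X⁆, Y⁆⁆
        = ⁅⁅⁅⁅Y, X⁆, Y⁆, ⁅⁅Y, X⁆, X⁆⁆, X⁆ ∧
      δ (⁅⁅⁅⁅Y, X⁆, X⁆, Y⁆, ⁅⁅Y, X⁆, X⁆⁆ - ⁅⁅⁅⁅Y, X⁆, X⁆, X⁆, ⁅⁅Y, X⁆, Y⁆⁆) = 0 := by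
  set X := FreeLieAlgebra.of K (0 : Fin 2)
  set Y := FreeLieAlgebra.of K (1 : Fin 2)
  refine ⟨degree_seven_aux X Y, ?_⟩
  have hb : δ ⁅Y, X⁆ = 0 := by rw [hδ, hx, hy, lie_zero, lie_self, zero_add]
  have ha : δ ⁅⁅Y, X⁆, X⁆ = 0 := by rw [hδ, hb, hx, lie_zero, zero_lie, add_zero]
  have hc : δ ⁅⁅Y, X⁆, Y⁆ = ⁅⁅Y, X⁆, X⁆ := by rw [hδ, hb, hy, zero_lie, zero_add]
  simp only [map_sub, hδ, ha, hb, hc, hx, hy, lie_zero, zero_lie, add_zero, zero_add, lie_self, lie_add, add_lie]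
  abel
end
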